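/- Let 𝒞 > 1 and 𝒞̃ = √(1 − 1/𝒞²). Let Ω ⊂ ℝⁿ be a bounded open set and let u, ū, Ψ : Ω → ℝ be C¹ functions that are strictly 𝒞-spacelike, i.e. |Du|, |Dū|, |DΨ| < 𝒞̃ on Ω. Assume u is strictly convex, u ≤ ū in Ω, and Ψ > ū near ∂Ω. Then for every x in the set {u > Ψ} = {y ∈ Ω : u(y) > Ψ(y)}, one has 1/√(𝒞̃²−|Du(x)|²) ≤ (1/(u(x)−Ψ(x))) · sup_{{u>Ψ}} (ū−Ψ)/√(𝒞̃²−|DΨ|²). -/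

import Mathlib

open Filter Real Set Metric Bornology

noncomputable section

abbrev Esp (n : ℕ) := EuclideanSpace ℝ (Fin n)

/-- i-th partial derivative of u at x. -/
def Egrad (n : ℕ) (u : Esp n → ℝ) (x : Esp n) : Fin n → ℝ :=
  fun i => fderiv ℝ u x (EuclideanSpace.single i 1)

/-- |Du(x)|². -/
def EgradSq (n : ℕ) (u : Esp n → ℝ) (x : Esp n) : ℝ :=
  ∑ i, (Egrad n u x i) ^ 2

/-- Hessian matrix D²u(x). -/
def Ehess (n : ℕ) (u : Esp n → ℝ) (x : Esp n) : Matrix (Fin n) (Fin n) ℝ :=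
  fun i j => fderiv ℝ (fun y => fderiv ℝ u y (EuclideanSpace.single j 1)) x
    (EuclideanSpace.single i 1)

/-- Curvature matrix A = (1/w) γ D²u γ. -/
def curvMat (n : ℕ) (u : Esp n → ℝ) (x : Esp n) : Matrix (Fin n) (Fin n) ℝ :=
  let Du := Egrad n u x
  let w := Real.sqrt (1 - EgradSq n u x)
  let γ : Matrix (Fin n) (Fin n) ℝ :=
    fun i k => (if i = k then (1 : ℝ) else 0) + Du i * Du k / (w * (1 + w))
  w⁻¹ • (γ * Ehess n u x * γ)

open Classical in
/-- Eigenvalues of a symmetric real matrix (junk value if not symmetric). -/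
def matEigs {m : ℕ} (A : Matrix (Fin m) (Fin m) ℝ) : Fin m → ℝ :=
  if h : A.IsHermitian then h.eigenvalues else 0

/-- Principal curvatures κ[M_u](x). -/
def princCurv (n : ℕ) (u : Esp n → ℝ) (x : Esp n) : Fin n → ℝ :=
  matEigs (curvMat n u x)

/-- k-th elementary symmetric polynomial σ_k. -/
def esymm (n k : ℕ) (κ : Fin n → ℝ) : ℝ :=
  (Finset.powersetCard k (Finset.univ : Finset (Fin n))).sum fun s => s.prod κ

/-- Gårding cone Γ_k. -/
def inGammaK (n k : ℕ) (κ : Fin n → ℝ) : Prop :=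
  ∀ m : ℕ, 1 ≤ m → m ≤ k → 0 < esymm n m κ

/-- Position vector X = (x, u(x)) ∈ ℝ^{n+1}. -/
def posVec (n : ℕ) (u : Esp n → ℝ) (x : Esp n) : Fin (n + 1) → ℝ :=
  Fin.snoc (fun i => x i) (u x)

/-- Upward unit timelike normal ν = (Du, 1)/w ∈ ℝ^{n+1}. -/
def normalVec (n : ℕ) (u : Esp n → ℝ) (x : Esp n) : Fin (n + 1) → ℝ :=
  Fin.snoc (fun i => Egrad n u x i / Real.sqrt (1 - EgradSq n u x))
    (1 / Real.sqrt (1 - EgradSq n u x))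

/-- The hyperboloid ℍⁿ ⊂ ℝ^{n,1}. -/
def hyperboloid (n : ℕ) : Set (Fin (n + 1) → ℝ) :=
  {ν | (∑ i : Fin n, (ν i.castSucc) ^ 2) - (ν (Fin.last n)) ^ 2 = -1 ∧ 0 < ν (Fin.last n)}


/-- 𝒞̃ = √(1 - 1/𝒞²). -/
def Ctil (𝒞 : ℝ) : ℝ := Real.sqrt (1 - 1 / 𝒞 ^ 2)

/-
If the estimate failed at `x`, then `|DΨ y| < |Du x|` at every point `y` of `{u > Ψ}` with
`u y - Ψ y ≥ u x - Ψ x`, because `u ≤ ū` and `(ū - Ψ) / √(𝒞̃² - |DΨ|²)` is at most the supremum.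
Follow the ray `t ↦ x + t Du(x)`. By convexity `u` lies above its tangent plane at `x`, so
`u x + t |Du x|² - Ψ` is a lower bound for `u - Ψ` along the ray, and its derivative stays positive
as long as it is at least `u x - Ψ x`. By fencing it never drops below `u x - Ψ x > 0` before the
ray first leaves `{u > Ψ}`; since `ū < Ψ` near `∂Ω`, that exit point lies in `Ω`, where `u ≤ Ψ`.
-/

open InnerProductSpace

theorem norm_gradient {E : Type*} [NormedAddCommGroup E] [InnerProductSpace ℝ E] [CompleteSpace E]
    (f : E → ℝ) (x : E) : ‖gradient f x‖ = ‖fderiv ℝ f x‖ :=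
  (toDual ℝ E).symm.norm_map _

theorem egradSq_eq_norm_fderiv_sq {n : ℕ} (f : Esp n → ℝ) (x : Esp n) :
    EgradSq n f x = ‖fderiv ℝ f x‖ ^ 2 := by
  have hcoord (i : Fin n) : Egrad n f x i = gradient f x i := by
    rw [Egrad, ← inner_gradient_left, EuclideanSpace.inner_single_right]
    simp
  simp [EgradSq, hcoord, ← norm_gradient, EuclideanSpace.real_norm_sq_eq]

theorem ConvexOn.add_fderiv_sub_le {E : Type*} [NormedAddCommGroup E] [NormedSpace ℝ E]
    {s : Set E} {f : E → ℝ} {x y : E} (hf : ConvexOn ℝ s f) (hx : x ∈ s) (hy : y ∈ s)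
    (hfx : DifferentiableAt ℝ f x) : f x + fderiv ℝ f x (y - x) ≤ f y := by
  let L : ℝ →ᵃ[ℝ] E := AffineMap.lineMap x y
  have hL : HasDerivAt (f ∘ L) (fderiv ℝ f x (y - x)) 0 := by
    have hfL : HasFDerivAt f (fderiv ℝ f x) (L 0) := by simpa [L] using hfx.hasFDerivAt
    exact hfL.comp_hasDerivAt 0 AffineMap.hasDerivAt_lineMap
  have := (hf.comp_affineMap L).le_slope_of_hasDerivAt (x := 0) (y := 1) (by simpa [L])
    (by simpa [L]) zero_lt_one hL
  simp only [slope_def_field, Function.comp_apply, AffineMap.lineMap_apply_one,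
    AffineMap.lineMap_apply_zero, sub_zero, div_one, L] at this
  linarith

theorem Continuous.exists_pos_forall_mem_Ico_and_mem_frontier {X : Type*} [TopologicalSpace X]
    {γ : ℝ → X} {S : Set X} (hγ : Continuous γ) (hS : IsOpen S) (h0 : γ 0 ∈ S)
    (hexit : ∃ t, 0 ≤ t ∧ γ t ∉ S) :
    ∃ T > 0, (∀ t ∈ Ico 0 T, γ t ∈ S) ∧ γ T ∈ frontier S := by
  set Z := Ici 0 ∩ γ ⁻¹' Sᶜ
  have hZ : IsClosed Z := isClosed_Ici.inter (hS.isClosed_compl.preimage hγ)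
  have hZbdd : BddBelow Z := ⟨0, fun _ ht => ht.1⟩
  have hTZ : sInf Z ∈ Z := hZ.csInf_mem hexit hZbdd
  have hT : 0 < sInf Z := hTZ.1.lt_of_ne fun h => hTZ.2 (h ▸ h0)
  have hbefore : ∀ t ∈ Ico 0 (sInf Z), γ t ∈ S := fun t ht => by
    by_contra h
    exact (csInf_le hZbdd ⟨ht.1, h⟩).not_gt ht.2
  refine ⟨sInf Z, hT, hbefore, hS.frontier_eq ▸ ⟨?_, hTZ.2⟩⟩
  refine mem_closure_of_tendsto
    ((hγ.tendsto _).mono_left (nhdsWithin_le_nhds (s := Iio (sInf Z)))) ?_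
  filter_upwards [Ioo_mem_nhdsLT hT] with t ht using hbefore t ⟨ht.1.le, ht.2⟩

theorem IsOpen.exists_pos_forall_add_smul_mem_and_mem_frontier {E : Type*}
    [NormedAddCommGroup E] [NormedSpace ℝ E] {S : Set E} (hS : IsOpen S) (hSb : IsBounded S)
    {x v : E} (hx : x ∈ S) (hv : v ≠ 0) :
    ∃ T : ℝ, 0 < T ∧ (∀ t ∈ Ico 0 T, x + t • v ∈ S) ∧ x + T • v ∈ frontier S := by
  refine Continuous.exists_pos_forall_mem_Ico_and_mem_frontier (γ := fun t => x + t • v)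
    (by fun_prop) hS (by simpa using hx) ?_
  obtain ⟨r, hr, hSr⟩ := hSb.subset_ball_lt 0 x
  have hv' : 0 < ‖v‖ := norm_pos_iff.2 hv
  refine ⟨r / ‖v‖, by positivity, fun h => (mem_ball.1 (hSr h)).ne ?_⟩
  simp [dist_eq_norm, norm_smul, abs_of_pos hr, hv'.ne']

theorem DifferentiableAt.hasDerivAt_comp_add_smul {E F : Type*} [NormedAddCommGroup E]
    [NormedSpace ℝ E] [NormedAddCommGroup F] [NormedSpace ℝ F] {f : E → F} {x v : E} {t : ℝ}
    (hf : DifferentiableAt ℝ f (x + t • v)) :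
    HasDerivAt (fun s : ℝ => f (x + s • v)) (fderiv ℝ f (x + t • v) v) t := by
  have hray : HasDerivAt (fun s : ℝ => x + s • v) v t := by
    simpa using ((hasDerivAt_id t).smul_const v).const_add x
  exact hf.hasFDerivAt.comp_hasDerivAt t hray

theorem exists_le_sub_and_norm_fderiv_le {E : Type*} [NormedAddCommGroup E]
    [InnerProductSpace ℝ E] [CompleteSpace E] {Ω : Set E} {u Ψ : E → ℝ} (hΩ : IsOpen Ω)
    (hu : ConvexOn ℝ Ω u) (hud : DifferentiableOn ℝ u Ω) (hΨd : DifferentiableOn ℝ Ψ Ω)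
    (hcl : closure {y ∈ Ω | Ψ y < u y} ⊆ Ω) (hbdd : IsBounded {y ∈ Ω | Ψ y < u y})
    {x : E} (hx : x ∈ Ω) (hxΨ : Ψ x < u x) :
    ∃ y ∈ Ω, Ψ y < u y ∧ u x - Ψ x ≤ u y - Ψ y ∧ ‖fderiv ℝ u x‖ ≤ ‖fderiv ℝ Ψ y‖ := by
  by_contra! H
  set S := {y ∈ Ω | Ψ y < u y}
  set g := gradient u x
  set p := ‖fderiv ℝ u x‖
  have hp : 0 < p := (norm_nonneg _).trans_lt (H x hx hxΨ le_rfl)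
  have hg : ‖g‖ = p := norm_gradient u x
  have hug : fderiv ℝ u x g = p ^ 2 := by
    rw [← inner_gradient_left, real_inner_self_eq_norm_sq, hg]
  have hS : IsOpen S := by
    have : S = Ω ∩ (fun y => u y - Ψ y) ⁻¹' Ioi 0 := by ext; simp [S, sub_pos]
    exact this ▸ (hud.continuousOn.sub hΨd.continuousOn).isOpen_inter_preimage hΩ isOpen_Ioi
  obtain ⟨T, hT, hbefore, hTfr⟩ := hS.exists_pos_forall_add_smul_mem_and_mem_frontier hbdd
    (x := x) ⟨hx, hxΨ⟩ (norm_pos_iff.1 (hg ▸ hp))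
  have hTΩ : x + T • g ∈ Ω := hcl (frontier_subset_closure hTfr)
  have hIcc : ∀ t ∈ Icc 0 T, x + t • g ∈ Ω := fun t ht =>
    ht.2.lt_or_eq.elim (fun h => (hbefore t ⟨ht.1, h⟩).1) (· ▸ hTΩ)
  have hsupp : ∀ t, x + t • g ∈ Ω → u x + t * p ^ 2 ≤ u (x + t • g) := fun t ht => by
    simpa [hug] using hu.add_fderiv_sub_le hx ht (hud.differentiableAt (hΩ.mem_nhds hx))
  set h : ℝ → ℝ := fun t => u x + t * p ^ 2 - Ψ (x + t • g)
  have hh : ∀ t, x + t • g ∈ Ω → HasDerivAt h (p ^ 2 - fderiv ℝ Ψ (x + t • g) g) t :=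
    fun t ht => by
      simpa using (((hasDerivAt_id t).mul_const (p ^ 2)).const_add (u x)).fun_sub
        (hΨd.differentiableAt (hΩ.mem_nhds ht)).hasDerivAt_comp_add_smul
  have hgrowth : ∀ t ∈ Ico 0 T, u x - Ψ x = h t → 0 < p ^ 2 - fderiv ℝ Ψ (x + t • g) g := by
    intro t ht hd
    obtain ⟨htΩ, htΨ⟩ := hbefore t ht
    have hlt := H _ htΩ htΨ (by linarith [hsupp t htΩ])
    have : fderiv ℝ Ψ (x + t • g) g < p ^ 2 := calc
      fderiv ℝ Ψ (x + t • g) g ≤ ‖fderiv ℝ Ψ (x + t • g)‖ * ‖g‖ :=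
        (le_abs_self _).trans ((fderiv ℝ Ψ _).le_opNorm g)
      _ < p ^ 2 := by rw [hg, sq]; gcongr
    linarith
  have hfence := image_le_of_deriv_right_lt_deriv_boundary' (f := fun _ => u x - Ψ x)
    (f' := 0) (B := h) (b := T) continuousOn_const (fun _ _ => hasDerivWithinAt_const _ _ _)
    (by simp [h]) (fun t ht => (hh t (hIcc t ht)).continuousAt.continuousWithinAt)
    (fun t ht => (hh t (hIcc t ⟨ht.1, ht.2.le⟩)).hasDerivWithinAt) hgrowth
    (right_mem_Icc.2 hT.le)
  have hTΨ : u (x + T • g) ≤ Ψ (x + T • g) :=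
    not_lt.1 fun h => (hS.frontier_eq ▸ hTfr).2 ⟨hTΩ, h⟩
  linarith [hsupp T hTΩ]

theorem one_div_sqrt_sub_norm_fderiv_sq_le {E : Type*} [NormedAddCommGroup E]
    [InnerProductSpace ℝ E] [CompleteSpace E] {Ω K : Set E} {u ub Ψ : E → ℝ} {c : ℝ}
    (hΩ : IsOpen Ω) (hud : DifferentiableOn ℝ u Ω) (hub : ContinuousOn ub Ω)
    (hΨ : ContDiffOn ℝ 1 Ψ Ω) (hu : ConvexOn ℝ Ω u) (hΨc : ∀ y ∈ Ω, ‖fderiv ℝ Ψ y‖ < c)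
    (hule : ∀ y ∈ Ω, u y ≤ ub y) (hK : IsCompact K) (hKΩ : K ⊆ Ω)
    (hK_out : ∀ y ∈ Ω \ K, ub y < Ψ y) {x : E} (hx : x ∈ Ω) (hxΨ : Ψ x < u x) :
    1 / √(c ^ 2 - ‖fderiv ℝ u x‖ ^ 2) ≤ 1 / (u x - Ψ x) *
      sSup ((fun y => (ub y - Ψ y) / √(c ^ 2 - ‖fderiv ℝ Ψ y‖ ^ 2)) '' {y ∈ Ω | Ψ y < u y}) := by
  set S := {y ∈ Ω | Ψ y < u y}
  set F := fun y => (ub y - Ψ y) / √(c ^ 2 - ‖fderiv ℝ Ψ y‖ ^ 2)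
  have hw (y) (hy : y ∈ Ω) : 0 < √(c ^ 2 - ‖fderiv ℝ Ψ y‖ ^ 2) := by
    have := hΨc y hy
    have := norm_nonneg (fderiv ℝ Ψ y)
    exact Real.sqrt_pos.2 (by nlinarith)
  have hSK : S ⊆ K := fun y hy => by_contra fun hyK => by
    linarith [hK_out y ⟨hy.1, hyK⟩, hule y hy.1, hy.2]
  have hclK : closure S ⊆ K := closure_minimal hSK hK.isClosed
  have hF : ContinuousOn F Ω :=
    (hub.sub hΨ.continuousOn).div (continuous_sqrt.comp_continuousOn (continuousOn_const.sub
      ((hΨ.continuousOn_fderiv_of_isOpen hΩ le_rfl).norm.pow 2))) fun y hy => (hw y hy).ne'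
  have hFS : BddAbove (F '' S) :=
    ((hK.of_isClosed_subset isClosed_closure hclK).image_of_continuousOn
      (hF.mono (hclK.trans hKΩ))).bddAbove.mono (image_mono subset_closure)
  obtain ⟨y, hyΩ, hyΨ, hdy, hgrad⟩ := exists_le_sub_and_norm_fderiv_le hΩ hu hud
    (hΨ.differentiableOn one_ne_zero) (hclK.trans hKΩ) (hK.isBounded.subset hSK) hx hxΨ
  have hFy : F y ≤ sSup (F '' S) := le_csSup hFS ⟨y, ⟨hyΩ, hyΨ⟩, rfl⟩
  have hFy0 : 0 ≤ F y := div_nonneg (by linarith [hule y hyΩ]) (hw y hyΩ).le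
  have hwxy : √(c ^ 2 - ‖fderiv ℝ Ψ y‖ ^ 2) ≤ √(c ^ 2 - ‖fderiv ℝ u x‖ ^ 2) := by
    gcongr
  have hwx : 0 < √(c ^ 2 - ‖fderiv ℝ u x‖ ^ 2) := (hw y hyΩ).trans_le hwxy
  rw [one_div_mul_eq_div, div_le_div_iff₀ hwx (sub_pos.2 hxΨ), one_mul]
  calc u x - Ψ x ≤ ub y - Ψ y := by linarith [hule y hyΩ]
    _ = F y * √(c ^ 2 - ‖fderiv ℝ Ψ y‖ ^ 2) := (div_mul_cancel₀ _ (hw y hyΩ).ne').symm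
    _ ≤ sSup (F '' S) * √(c ^ 2 - ‖fderiv ℝ u x‖ ^ 2) :=
      mul_le_mul hFy hwxy (hw y hyΩ).le (hFy0.trans hFy)

theorem stmt16_general (n : ℕ) (𝒞 : ℝ)
    (Ω : Set (Esp n)) (hΩo : IsOpen Ω)
    (u ub Ψ : Esp n → ℝ)
    (huC1 : ContDiffOn ℝ 1 u Ω) (hubC1 : ContDiffOn ℝ 1 ub Ω) (hΨC1 : ContDiffOn ℝ 1 Ψ Ω)
    (hΨsp : ∀ x ∈ Ω, Real.sqrt (EgradSq n Ψ x) < Ctil 𝒞)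
    (huconv : StrictConvexOn ℝ Ω u)
    (hule : ∀ x ∈ Ω, u x ≤ ub x)
    (hnear : ∃ K : Set (Esp n), IsCompact K ∧ K ⊆ Ω ∧ ∀ x ∈ Ω \ K, ub x < Ψ x) :
    ∀ x ∈ Ω, Ψ x < u x →
      1 / Real.sqrt (Ctil 𝒞 ^ 2 - EgradSq n u x) ≤
        (1 / (u x - Ψ x)) *
          sSup ((fun y => (ub y - Ψ y) / Real.sqrt (Ctil 𝒞 ^ 2 - EgradSq n Ψ y)) ''
            {y ∈ Ω | Ψ y < u y}) := by
  intro x hx hxΨ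
  obtain ⟨K, hK, hKΩ, hK_out⟩ := hnear
  simp only [egradSq_eq_norm_fderiv_sq, Real.sqrt_sq (norm_nonneg _)] at hΨsp ⊢
  exact one_div_sqrt_sub_norm_fderiv_sq_le hΩo (huC1.differentiableOn one_ne_zero)
    hubC1.continuousOn hΨC1 huconv.convexOn hΨsp hule hK hKΩ hK_out hx hxΨ

/-- local gradient estimate for strictly 𝒞-spacelike strictly
convex graphs (translating soliton version of the Bayard–Schnürer estimate). -/
theorem stmt16 (n : ℕ) (hn : 1 ≤ n) (𝒞 : ℝ) (h𝒞 : 1 < 𝒞)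
    (Ω : Set (Esp n)) (hΩo : IsOpen Ω) (hΩb : IsBounded Ω)
    (u ub Ψ : Esp n → ℝ)
    (huC1 : ContDiffOn ℝ 1 u Ω) (hubC1 : ContDiffOn ℝ 1 ub Ω) (hΨC1 : ContDiffOn ℝ 1 Ψ Ω)
    (husp : ∀ x ∈ Ω, Real.sqrt (EgradSq n u x) < Ctil 𝒞)
    (hubsp : ∀ x ∈ Ω, Real.sqrt (EgradSq n ub x) < Ctil 𝒞)
    (hΨsp : ∀ x ∈ Ω, Real.sqrt (EgradSq n Ψ x) < Ctil 𝒞)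
    (huconv : StrictConvexOn ℝ Ω u)
    (hule : ∀ x ∈ Ω, u x ≤ ub x)
    (hnear : ∃ K : Set (Esp n), IsCompact K ∧ K ⊆ Ω ∧ ∀ x ∈ Ω \ K, ub x < Ψ x) :
    ∀ x ∈ Ω, Ψ x < u x →
      1 / Real.sqrt (Ctil 𝒞 ^ 2 - EgradSq n u x) ≤
        (1 / (u x - Ψ x)) *
          sSup ((fun y => (ub y - Ψ y) / Real.sqrt (Ctil 𝒞 ^ 2 - EgradSq n Ψ y)) ''
            {y ∈ Ω | Ψ y < u y}) :=
  stmt16_general n 𝒞 Ω hΩo u ub Ψ huC1 hubC1 hΨC1 hΨsp huconv hule hnear
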